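/- ∑_{n=1}^∞ C(2n,n)/(n²·4^n)·zⁿ = 2·∫_0^z log(2/(1+√(1-t)))·dt/t for all z ∈ [0,1), and consequently ∑_{n=1}^∞ C(2n,n)/(n²·4^n) = 2·∫_0^1 log(2/(1+√(1-t)))·dt/t (both sides being finite). -/

import Mathlib

/-!
Write `cₙ = C(2n,n)/4ⁿ`; this is `multichoose (1/2) n`, so the binomial series gives
`∑ cₙ tⁿ = 1/√(1-t)` for `|t| < 1`. Since `(1/√(1-t) - 1)/t` is the derivative of
`2 log(2/(1+√(1-t)))`, integrating `∑ cₙ₊₁ tⁿ` termwise from `0` to `z` gives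
`∑ cₙ zⁿ/n = 2 log(2/(1+√(1-z)))`, and dividing by `t` and integrating once more gives the
series with weight `1/n²`. At `z = 1` both sides are continuous from the left: the series by
Abel's theorem, the integral because `0 ≤ log(2/(1+√(1-t))) ≤ t` on `[0,1]`.
-/

open Real Filter Topology MeasureTheory
open Nat (centralBinom)

theorem hasSum_div_succ_mul_pow_succ {a : ℕ → ℝ} {z : ℝ}
    (ha : Summable fun n ↦ |a n| * |z| ^ n) :
    HasSum (fun n ↦ a n / (n + 1) * z ^ (n + 1)) (∫ t in 0..z, ∑' n, a n * t ^ n) := by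
  have hbound (n : ℕ) (t : ℝ) (ht : t ∈ Set.uIoc 0 z) :
      ‖a n * t ^ n‖ ≤ |a n| * |z| ^ n := by
    rw [norm_mul, norm_pow, Real.norm_eq_abs, Real.norm_eq_abs]
    have htz : |t| ≤ |z| := by
      simpa using Set.abs_sub_left_of_mem_uIcc (Set.uIoc_subset_uIcc ht)
    exact mul_le_mul_of_nonneg_left (pow_le_pow_left₀ (abs_nonneg t) htz n) (abs_nonneg _)
  have h := intervalIntegral.hasSum_integral_of_dominated_convergence (μ := volume) (a := 0)
    (b := z) (F := fun n t ↦ a n * t ^ n) (fun n _ ↦ |a n| * |z| ^ n)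
    (fun n ↦ (continuous_const.mul (continuous_pow n)).aestronglyMeasurable)
    (fun n ↦ ae_of_all _ (hbound n)) (ae_of_all _ fun _ _ ↦ ha) intervalIntegrable_const
    (ae_of_all _ fun t ht ↦ (ha.of_norm_bounded fun n ↦ hbound n t ht).hasSum)
  have hint (n : ℕ) : ∫ t in 0..z, a n * t ^ n = a n / (n + 1) * z ^ (n + 1) := by
    rw [intervalIntegral.integral_const_mul, integral_pow]
    ring
  simpa only [hint] using h

theorem summable_abs_mul_pow_of_abs_le_one {a : ℕ → ℝ} (ha : ∀ n, |a n| ≤ 1) {z : ℝ}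
    (hz : |z| < 1) : Summable fun n ↦ |a n| * |z| ^ n :=
  (summable_geometric_of_lt_one (abs_nonneg z) hz).of_nonneg_of_le (fun _ ↦ by positivity)
    fun n ↦ mul_le_of_le_one_left (by positivity) (ha n)

theorem hasSum_of_tendsto_of_hasSum_mul_pow_succ {a : ℕ → ℝ} {F : ℝ → ℝ} {l : ℝ}
    (ha : Summable a) (hF : ∀ x ∈ Set.Ioo 0 1, HasSum (fun n ↦ a n * x ^ (n + 1)) (F x))
    (hl : Tendsto F (𝓝[<] 1) (𝓝 l)) : HasSum a l := by
  have habel : Tendsto (fun x ↦ x * ∑' n, a n * x ^ n) (𝓝[<] 1) (𝓝 (1 * ∑' n, a n)) :=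
    (tendsto_nhdsWithin_of_tendsto_nhds tendsto_id).mul
      (Real.tendsto_tsum_powerSeries_nhdsWithin_lt ha.hasSum.tendsto_sum_nat)
  have hFeq : (fun x ↦ x * ∑' n, a n * x ^ n) =ᶠ[𝓝[<] 1] F :=
    eventually_of_mem (Ioo_mem_nhdsLT zero_lt_one) fun x hx ↦ by
      dsimp only
      rw [← (hF x hx).tsum_eq, ← tsum_mul_left]
      exact tsum_congr fun n ↦ by ring
  rw [one_mul] at habel
  rw [tendsto_nhds_unique hl (habel.congr' hFeq)]
  exact ha.hasSum

section CharZero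

variable {K : Type*} [Field K] [CharZero K]

theorem ascPochhammer_eval_one_half (n : ℕ) :
    (ascPochhammer K n).eval (1 / 2) = n.factorial * centralBinom n / 4 ^ n := by
  induction n with
  | zero => simp
  | succ n ih =>
    have hrec : ((n : K) + 1) * centralBinom (n + 1)
        = 2 * (2 * n + 1) * centralBinom n := by
      exact_mod_cast Nat.succ_mul_centralBinom_succ n
    have hfact : (n.factorial : K) ≠ 0 := by exact_mod_cast n.factorial_ne_zero
    rw [ascPochhammer_succ_eval, ih, Nat.factorial_succ, pow_succ]
    push_cast
    field_simp
    linear_combination (-2) * hrec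

theorem Ring.multichoose_one_half (n : ℕ) :
    Ring.multichoose (1 / 2 : K) n = centralBinom n / 4 ^ n := by
  have h := Ring.factorial_nsmul_multichoose_eq_ascPochhammer (1 / 2 : K) n
  rw [nsmul_eq_mul, Polynomial.ascPochhammer_smeval_eq_eval, ascPochhammer_eval_one_half,
    mul_div_assoc] at h
  exact mul_left_cancel₀ (by exact_mod_cast n.factorial_ne_zero) h

end CharZero

theorem hasSum_centralBinom_div_four_pow_mul_pow {x : ℝ} (hx : |x| < 1) :
    HasSum (fun n ↦ (centralBinom n / 4 ^ n : ℝ) * x ^ n) (1 / √(1 - x)) := by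
  have h := (one_div_one_sub_rpow_hasFPowerSeriesOnBall_zero (1 / 2)).hasSum
    (y := x) (by simpa [enorm_eq_nnnorm, ← NNReal.coe_lt_coe] using hx)
  simp only [FormalMultilinearSeries.ofScalars_apply_eq, zero_add, smul_eq_mul] at h
  rw [sqrt_eq_rpow]
  simp_rw [← Ring.multichoose_one_half, Ring.multichoose_eq]
  exact h

theorem centralBinom_div_four_pow_le_one (n : ℕ) : (centralBinom n / 4 ^ n : ℝ) ≤ 1 :=
  div_le_one_of_le₀ (by exact_mod_cast Nat.centralBinom_le_four_pow n) (by positivity)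

theorem hasSum_centralBinom_succ_div_four_pow_mul_pow {t : ℝ} (ht0 : 0 < t) (ht1 : t < 1) :
    HasSum (fun n : ℕ ↦ (centralBinom (n + 1) / 4 ^ (n + 1) : ℝ) * t ^ n)
      (1 / (√(1 - t) * (1 + √(1 - t)))) := by
  have h : HasSum (fun n : ℕ ↦ (centralBinom (n + 1) / 4 ^ (n + 1) : ℝ) * t ^ (n + 1))
      (1 / √(1 - t) - 1) := by
    have h := (hasSum_nat_add_iff' 1).2
      (hasSum_centralBinom_div_four_pow_mul_pow (by rwa [abs_of_pos ht0]))
    simpa using h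
  have hs : 0 < √(1 - t) := sqrt_pos.2 (by linarith)
  have hsq : √(1 - t) ^ 2 = 1 - t := sq_sqrt (by linarith)
  have hvalue : 1 / (√(1 - t) * (1 + √(1 - t))) = (1 / √(1 - t) - 1) / t := by
    field_simp
    nlinarith
  have hterms : (fun n : ℕ ↦ (centralBinom (n + 1) / 4 ^ (n + 1) : ℝ) * t ^ n)
      = fun n ↦ (centralBinom (n + 1) / 4 ^ (n + 1) : ℝ) * t ^ (n + 1) / t := by
    ext n
    field_simp
    ring
  rw [hvalue, hterms]
  exact h.div_const t

theorem hasDerivAt_two_mul_log_two_div_one_add_sqrt_one_sub {t : ℝ} (ht : t < 1) :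
    HasDerivAt (fun x ↦ 2 * log (2 / (1 + √(1 - x))))
      (1 / (√(1 - t) * (1 + √(1 - t)))) t := by
  have hs : 0 < √(1 - t) := sqrt_pos.2 (by linarith)
  have hsqrt := (((hasDerivAt_id' t).const_sub 1).sqrt (by linarith)).const_add 1
  have hlog := ((hsqrt.log (by positivity)).const_sub (log 2)).const_mul 2
  have hfun : (fun x ↦ 2 * log (2 / (1 + √(1 - x))))
      = fun x ↦ 2 * (log 2 - log (1 + √(1 - x))) := by
    ext x
    rw [log_div two_ne_zero (by positivity)]
  rw [hfun]
  exact hlog.congr_deriv (by field_simp)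

theorem hasSum_centralBinom_div_four_pow_div_succ_mul_pow {z : ℝ} (hz0 : 0 ≤ z) (hz1 : z < 1) :
    HasSum (fun n : ℕ ↦ (centralBinom (n + 1) / 4 ^ (n + 1) : ℝ) / (n + 1) * z ^ (n + 1))
      (2 * log (2 / (1 + √(1 - z)))) := by
  have hcoef (n : ℕ) : |(centralBinom (n + 1) / 4 ^ (n + 1) : ℝ)| ≤ 1 := by
    rw [abs_of_nonneg (by positivity)]
    exact centralBinom_div_four_pow_le_one _
  have h := hasSum_div_succ_mul_pow_succ
    (summable_abs_mul_pow_of_abs_le_one hcoef (by rwa [abs_of_nonneg hz0]))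
  have hderiv : ∀ t ∈ Set.uIcc 0 z, HasDerivAt (fun x ↦ 2 * log (2 / (1 + √(1 - x))))
      (1 / (√(1 - t) * (1 + √(1 - t)))) t := fun t ht ↦
    hasDerivAt_two_mul_log_two_div_one_add_sqrt_one_sub
      (lt_of_le_of_lt (Set.uIcc_of_le hz0 ▸ ht).2 hz1)
  have hcont : ContinuousOn (fun t ↦ 1 / (√(1 - t) * (1 + √(1 - t)))) (Set.uIcc 0 z) :=
    ContinuousOn.div continuousOn_const (by fun_prop) fun t ht ↦ by
      have : 0 < √(1 - t) := sqrt_pos.2 (by linarith [(Set.uIcc_of_le hz0 ▸ ht).2])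
      positivity
  have hint : ∫ t in 0..z, 1 / (√(1 - t) * (1 + √(1 - t)))
      = ∫ t in 0..z, ∑' n : ℕ, (centralBinom (n + 1) / 4 ^ (n + 1) : ℝ) * t ^ n := by
    refine intervalIntegral.integral_congr_ae (ae_of_all _ fun t ht ↦ ?_)
    rw [Set.uIoc_of_le hz0] at ht
    exact (hasSum_centralBinom_succ_div_four_pow_mul_pow ht.1 (by linarith [ht.2])).tsum_eq.symm
  rw [← hint, intervalIntegral.integral_eq_sub_of_hasDerivAt hderiv hcont.intervalIntegrable] at h
  rwa [sub_zero, sqrt_one, one_add_one_eq_two, div_self two_ne_zero, log_one, mul_zero,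
    sub_zero] at h

theorem hasSum_centralBinom_div_four_pow_div_succ_sq_mul_pow {z : ℝ} (hz0 : 0 ≤ z)
    (hz1 : z < 1) :
    HasSum
      (fun n : ℕ ↦ (centralBinom (n + 1) / 4 ^ (n + 1) : ℝ) / (n + 1) / (n + 1) * z ^ (n + 1))
      (2 * ∫ t in 0..z, log (2 / (1 + √(1 - t))) / t) := by
  have hcoef (n : ℕ) : |(centralBinom (n + 1) / 4 ^ (n + 1) : ℝ) / (n + 1)| ≤ 1 := by
    rw [abs_of_nonneg (by positivity)]
    exact div_le_one_of_le₀ ((centralBinom_div_four_pow_le_one _).trans (by simp))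
      (by positivity)
  have h := hasSum_div_succ_mul_pow_succ
    (summable_abs_mul_pow_of_abs_le_one hcoef (by rwa [abs_of_nonneg hz0]))
  have hint :
      ∫ t in 0..z, ∑' n : ℕ, (centralBinom (n + 1) / 4 ^ (n + 1) : ℝ) / (n + 1) * t ^ n
        = ∫ t in 0..z, 2 * (log (2 / (1 + √(1 - t))) / t) := by
    refine intervalIntegral.integral_congr_ae (ae_of_all _ fun t ht ↦ ?_)
    rw [Set.uIoc_of_le hz0] at ht
    have hlog := hasSum_centralBinom_div_four_pow_div_succ_mul_pow ht.1.le (by linarith [ht.2])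
    rw [← mul_div_assoc, ← (hlog.div_const t).tsum_eq]
    refine tsum_congr fun n ↦ ?_
    field_simp [ht.1.ne']
    ring
  rwa [hint, intervalIntegral.integral_const_mul] at h

theorem log_two_div_one_add_sqrt_one_sub_mem_Icc {t : ℝ} (ht : t ∈ Set.Icc (0 : ℝ) 1) :
    log (2 / (1 + √(1 - t))) ∈ Set.Icc 0 t := by
  have hs0 : 0 ≤ √(1 - t) := sqrt_nonneg _
  have hsq : √(1 - t) ^ 2 = 1 - t := sq_sqrt (by linarith [ht.2])
  have hs1 : √(1 - t) ≤ 1 := by nlinarith [ht.1]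
  constructor
  · exact log_nonneg (by rw [le_div_iff₀ (by positivity)]; linarith)
  · calc log (2 / (1 + √(1 - t))) ≤ 2 / (1 + √(1 - t)) - 1 :=
          log_le_sub_one_of_pos (by positivity)
      _ = (1 - √(1 - t)) / (1 + √(1 - t)) := by field_simp; ring
      _ ≤ 1 - √(1 - t) := div_le_self (by linarith) (by linarith)
      _ ≤ t := by nlinarith

theorem integrableOn_log_two_div_one_add_sqrt_one_sub_div :
    IntegrableOn (fun t ↦ log (2 / (1 + √(1 - t))) / t) (Set.Icc 0 1) := by
  refine Measure.integrableOn_of_bounded (M := 1) measure_Icc_lt_top.ne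
    (Measurable.aestronglyMeasurable (by fun_prop))
    ((ae_restrict_iff' measurableSet_Icc).2 (ae_of_all _ fun t ht ↦ ?_))
  obtain ⟨h0, h1⟩ := log_two_div_one_add_sqrt_one_sub_mem_Icc ht
  rw [norm_div, Real.norm_of_nonneg h0, Real.norm_of_nonneg ht.1]
  exact div_le_one_of_le₀ h1 ht.1

theorem summable_centralBinom_div_four_pow_div_succ_sq :
    Summable fun n : ℕ ↦ (centralBinom (n + 1) / 4 ^ (n + 1) : ℝ) / (n + 1) / (n + 1) := by
  have h := (summable_nat_add_iff 1).2 (Real.summable_one_div_nat_pow.2 one_lt_two)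
  refine h.of_nonneg_of_le (fun n ↦ by positivity) fun n ↦ ?_
  rw [Nat.cast_add_one, div_div, ← sq]
  exact div_le_div_of_nonneg_right (centralBinom_div_four_pow_le_one _) (by positivity)

theorem tendsto_integral_log_two_div_one_add_sqrt_one_sub_div :
    Tendsto (fun z ↦ ∫ t in 0..z, log (2 / (1 + √(1 - t))) / t) (𝓝[<] 1)
      (𝓝 (∫ t in 0..1, log (2 / (1 + √(1 - t))) / t)) := by
  have hcont :
      ContinuousOn (fun z ↦ ∫ t in 0..z, log (2 / (1 + √(1 - t))) / t) (Set.Icc 0 1) := by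
    rw [← Set.uIcc_of_le zero_le_one]
    exact intervalIntegral.continuousOn_primitive_interval
      (Set.uIcc_of_le (zero_le_one' ℝ) ▸ integrableOn_log_two_div_one_add_sqrt_one_sub_div)
  have h := (hcont 1 (Set.right_mem_Icc.2 zero_le_one)).mono Set.Ioo_subset_Icc_self
  rwa [ContinuousWithinAt, nhdsWithin_Ioo_eq_nhdsLT zero_lt_one] at h

theorem central_binom_weight_two_integral :
    (∀ z : ℝ, 0 ≤ z → z < 1 →
      HasSum (fun n : ℕ =>
        ((Nat.choose (2 * (n + 1)) (n + 1) : ℝ) / (((n : ℝ) + 1) ^ 2 * 4 ^ (n + 1))) *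
          z ^ (n + 1))
        (2 * ∫ t in (0:ℝ)..z, Real.log (2 / (1 + Real.sqrt (1 - t))) / t))
    ∧ HasSum (fun n : ℕ =>
        (Nat.choose (2 * (n + 1)) (n + 1) : ℝ) / (((n : ℝ) + 1) ^ 2 * 4 ^ (n + 1)))
        (2 * ∫ t in (0:ℝ)..(1:ℝ), Real.log (2 / (1 + Real.sqrt (1 - t))) / t) := by
  have hcoef (n : ℕ) :
      (Nat.choose (2 * (n + 1)) (n + 1) : ℝ) / (((n : ℝ) + 1) ^ 2 * 4 ^ (n + 1))
        = (centralBinom (n + 1) / 4 ^ (n + 1) : ℝ) / (n + 1) / (n + 1) := by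
    rw [Nat.centralBinom_eq_two_mul_choose]
    field_simp
  simp only [hcoef]
  exact ⟨fun z hz0 hz1 ↦ hasSum_centralBinom_div_four_pow_div_succ_sq_mul_pow hz0 hz1,
    hasSum_of_tendsto_of_hasSum_mul_pow_succ summable_centralBinom_div_four_pow_div_succ_sq
      (fun x hx ↦ hasSum_centralBinom_div_four_pow_div_succ_sq_mul_pow hx.1.le hx.2)
      (tendsto_integral_log_two_div_one_add_sqrt_one_sub_div.const_mul 2)⟩
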